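/- If C = −P^{-1} Q with P = Γ^{-1} + B^T M B + B^T Σ^{-1} B and Q = B^T M A + B^T Σ^{-1} A, and M satisfies M = A^T Σ^{-1} A + A^T M A − Q^T P^{-1} Q, then the Lyapunov-type equation C^T Γ^{-1} C + (A+BC)^T Σ^{-1}(A+BC) + (A+BC)^T M (A+BC) − M = 0 holds. -/

import Mathlib

/-!
Expanding the closed-loop quadratic forms in `C` regroups the left-hand side as
`(Cᵀ P C + Qᵀ C + Cᵀ Q) + (Aᵀ Σ⁻¹ A + Aᵀ M A - M)`, the cross terms being `Qᵀ C` because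
`M` and `Σ⁻¹` are symmetric. At `C = -P⁻¹ Q` the first bracket is `-Qᵀ P⁻¹ Q` (completing
the square), and the Riccati equation says the second bracket is `Qᵀ P⁻¹ Q`.
-/

open Matrix

namespace Matrix

variable {R l m n : Type*} [CommRing R]

-- Also true for singular `P`, where the junk value `P⁻¹ = 0` makes both sides vanish.
theorem transpose_nonsing_inv_mul_mul_nonsing_inv_mul [Fintype m] [DecidableEq m]
    (P : Matrix m m R) (Q : Matrix m n R) :
    (P⁻¹ * Q)ᵀ * P * (P⁻¹ * Q) = (P⁻¹ * Q)ᵀ * Q := by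
  by_cases hP : IsUnit P.det
  · rw [Matrix.mul_assoc, mul_nonsing_inv_cancel_left P Q hP]
  · simp [nonsing_inv_apply_not_isUnit P hP]

theorem completing_square_of_eq_neg_nonsing_inv_mul [Fintype m] [DecidableEq m]
    {P : Matrix m m R} {Q C : Matrix m n R} (hC : C = -(P⁻¹ * Q)) :
    Cᵀ * P * C + Qᵀ * C + Cᵀ * Q = -(Qᵀ * P⁻¹ * Q) := by
  have hCPC : Cᵀ * P * C = (P⁻¹ * Q)ᵀ * Q := by
    rw [hC, transpose_neg, Matrix.neg_mul, Matrix.neg_mul, Matrix.mul_neg, neg_neg,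
      transpose_nonsing_inv_mul_mul_nonsing_inv_mul]
  rw [hCPC, hC, transpose_neg, Matrix.neg_mul, Matrix.mul_neg, Matrix.mul_assoc]
  abel

theorem transpose_add_mul_mul_add_mul [Fintype l] [Fintype m] (A : Matrix l n R)
    (B : Matrix l m R) (C : Matrix m n R) (X : Matrix l l R) :
    (A + B * C)ᵀ * X * (A + B * C)
      = Aᵀ * X * A + (Aᵀ * X * B) * C + Cᵀ * (Bᵀ * X * A) + Cᵀ * (Bᵀ * X * B) * C := by
  simp only [transpose_add, transpose_mul, Matrix.add_mul, Matrix.mul_add, Matrix.mul_assoc]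
  abel

theorem closedLoop_lyapunov_of_riccati [Fintype m] [Fintype n] [DecidableEq m]
    (A : Matrix n n R) (B : Matrix n m R) (G : Matrix m m R)
    {X M : Matrix n n R} (hX : X.IsSymm) (hM : M.IsSymm)
    {P : Matrix m m R} {Q C : Matrix m n R}
    (hP : P = G + Bᵀ * M * B + Bᵀ * X * B) (hQ : Q = Bᵀ * M * A + Bᵀ * X * A)
    (hC : C = -(P⁻¹ * Q)) (hRic : M = Aᵀ * X * A + Aᵀ * M * A - Qᵀ * P⁻¹ * Q) :
    Cᵀ * G * C + (A + B * C)ᵀ * X * (A + B * C) + (A + B * C)ᵀ * M * (A + B * C) - M = 0 := by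
  have hQt : Qᵀ = Aᵀ * M * B + Aᵀ * X * B := by
    simp only [hQ, transpose_add, transpose_mul, transpose_transpose, hM.eq, hX.eq,
      Matrix.mul_assoc]
  have hsplit :
      Cᵀ * G * C + (A + B * C)ᵀ * X * (A + B * C) + (A + B * C)ᵀ * M * (A + B * C) - M
      = (Cᵀ * P * C + Qᵀ * C + Cᵀ * Q) + (Aᵀ * X * A + Aᵀ * M * A - M) := by
    rw [transpose_add_mul_mul_add_mul, transpose_add_mul_mul_add_mul, hP, hQt, hQ]
    simp only [Matrix.mul_add, Matrix.add_mul, Matrix.mul_assoc]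
    abel
  rw [hsplit, completing_square_of_eq_neg_nonsing_inv_mul hC]
  nth_rewrite 2 [hRic]
  abel

end Matrix

theorem stmt11_general {n m : ℕ}
    (A : Matrix (Fin n) (Fin n) ℝ) (B : Matrix (Fin n) (Fin m) ℝ)
    (Γ : Matrix (Fin m) (Fin m) ℝ) (Sig M : Matrix (Fin n) (Fin n) ℝ)
    (hSig : Sig.PosDef) (hM : M.PosDef)
    (P : Matrix (Fin m) (Fin m) ℝ) (Q : Matrix (Fin m) (Fin n) ℝ)
    (hP : P = Γ⁻¹ + Bᵀ * M * B + Bᵀ * Sig⁻¹ * B)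
    (hQ : Q = Bᵀ * M * A + Bᵀ * Sig⁻¹ * A)
    (C : Matrix (Fin m) (Fin n) ℝ) (hC : C = -P⁻¹ * Q)
    (hRic : M = Aᵀ * Sig⁻¹ * A + Aᵀ * M * A - Qᵀ * P⁻¹ * Q) :
    Cᵀ * Γ⁻¹ * C + (A + B * C)ᵀ * Sig⁻¹ * (A + B * C)
      + (A + B * C)ᵀ * M * (A + B * C) - M = 0 :=
  closedLoop_lyapunov_of_riccati A B Γ⁻¹ (isHermitian_iff_isSymm.mp hSig.isHermitian).inv
    (isHermitian_iff_isSymm.mp hM.isHermitian) hP hQ (by rw [hC, Matrix.neg_mul]) hRic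

/-- Verification step of Theorem 1: with `C = -P⁻¹ Q` and `M` solving the
Riccati equation `M = Aᵀ Σ⁻¹ A + Aᵀ M A - Qᵀ P⁻¹ Q`, the Lyapunov-type
equation holds. -/
theorem stmt11 {n m : ℕ}
    (A : Matrix (Fin n) (Fin n) ℝ) (B : Matrix (Fin n) (Fin m) ℝ)
    (Γ : Matrix (Fin m) (Fin m) ℝ) (Sig M : Matrix (Fin n) (Fin n) ℝ)
    (hΓ : Γ.PosDef) (hSig : Sig.PosDef) (hM : M.PosDef)
    (P : Matrix (Fin m) (Fin m) ℝ) (Q : Matrix (Fin m) (Fin n) ℝ)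
    (hP : P = Γ⁻¹ + Bᵀ * M * B + Bᵀ * Sig⁻¹ * B)
    (hQ : Q = Bᵀ * M * A + Bᵀ * Sig⁻¹ * A)
    (C : Matrix (Fin m) (Fin n) ℝ) (hC : C = -P⁻¹ * Q)
    (hRic : M = Aᵀ * Sig⁻¹ * A + Aᵀ * M * A - Qᵀ * P⁻¹ * Q) :
    Cᵀ * Γ⁻¹ * C + (A + B * C)ᵀ * Sig⁻¹ * (A + B * C)
      + (A + B * C)ᵀ * M * (A + B * C) - M = 0 :=
  stmt11_general A B Γ Sig M hSig hM P Q hP hQ C hC hRic
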